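/- If H is a subgraph of the bunkbed graph and H contains a directed path from u^- to v^-, where every undirected path in G from u to v meets the post set P(H), and F is the set of edges of G reachable from v in the underlying undirected graph without passing through a vertex of P(H), then M(H,F) contains a directed path from u^- to v^+. (That is, mirroring across the reachable component of v flips the endpoint's bunk when the posts form an undirected cut-set.) -/

import Mathlib

/-- Edges of the bunkbed graph of a directed graph on vertex type `V`:
`horiz u v ε` is the copy of the directed edge `(u,v)` in bunk `ε`
(`false` = lower bunk `-`, `true` = upper bunk `+`); `vert w` is the
bidirected vertical edge `(w⁻, w⁺)`. -/
inductive BBEdge (V : Type) : Type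
  | horiz : V → V → Bool → BBEdge V
  | vert  : V → BBEdge V
deriving DecidableEq

/-- The `F`-mirroring map on single edges: vertical edges are fixed, a horizontal
edge whose shadow lies in `F` is sent to its mirrored copy in the other bunk, and
horizontal edges with shadow outside `F` are fixed. -/
def mir {V : Type} [DecidableEq V] (F : Finset (V × V)) : BBEdge V → BBEdge V
  | .horiz u v ε => if (u, v) ∈ F then .horiz u v (!ε) else .horiz u v ε
  | .vert w => .vert w

/-- The `F`-mirrored subgraph `M(H,F)`. -/
def M {V : Type} [DecidableEq V] (H : Finset (BBEdge V)) (F : Finset (V × V)) :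
    Finset (BBEdge V) :=
  H.image (mir F)
/-- The edge set of the bunkbed graph of the directed graph with vertex set `Vs`
and edge set `E`: the vertical edges at all vertices together with the two
horizontal copies of each edge. -/
def bbEdges {V : Type} [DecidableEq V] (Vs : Finset V) (E : Finset (V × V)) :
    Finset (BBEdge V) :=
  Vs.image BBEdge.vert ∪ E.image (fun p => BBEdge.horiz p.1 p.2 false) ∪
    E.image (fun p => BBEdge.horiz p.1 p.2 true)
/-- The set of posts of a subgraph `H` of the bunkbed graph: vertices whose
vertical edge belongs to `H`. -/
def posts {V : Type} [DecidableEq V] (H : Finset (BBEdge V)) : Set V :=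
  {w | BBEdge.vert w ∈ H}

/-- One step of directed traversal in a subgraph `H` of the bunkbed graph:
horizontal edges are used in their direction within a bunk, and vertical edges
may be traversed in both directions. Vertices of the bunkbed graph are pairs
`(w, ε)` with `ε : Bool` the bunk label (`false` = `-`, `true` = `+`). -/
def bbStep {V : Type} [DecidableEq V] (H : Finset (BBEdge V)) :
    V × Bool → V × Bool → Prop := fun a b =>
  (a.1 = b.1 ∧ a.2 ≠ b.2 ∧ BBEdge.vert a.1 ∈ H) ∨
    (a.2 = b.2 ∧ BBEdge.horiz a.1 b.1 a.2 ∈ H)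

/-- Directed reachability `x → y` in a subgraph of the bunkbed graph. -/
def bbReach {V : Type} [DecidableEq V] (H : Finset (BBEdge V))
    (a b : V × Bool) : Prop :=
  Relation.ReflTransGen (bbStep H) a b

/-!
Flip the bunk of every vertex of the component `C` of `v` in `G` minus the posts. A directed
path of `H` is carried edge by edge to a path of `M(H,F)`: inside `C`, and away from it, edges
are mirrored together with their endpoints or not at all; an edge leaving `C` ends at a post,
whose vertical edge repairs the bunk mismatch. Since the posts separate `u` from `v`, the start
`u⁻` stays put, and the end `v⁻` is sent to `v⁺`, directly if `v ∈ C`, through the post `v`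
otherwise.
-/

open Relation

section BunkbedMirror

variable {V : Type}

def flipOn (C : Set V) [DecidablePred (· ∈ C)] (a : V × Bool) : V × Bool :=
  if a.1 ∈ C then (a.1, !a.2) else a

@[simp] lemma flipOn_of_mem {C : Set V} [DecidablePred (· ∈ C)] {w : V} (hw : w ∈ C)
    (ε : Bool) : flipOn C (w, ε) = (w, !ε) :=
  if_pos hw

@[simp] lemma flipOn_of_notMem {C : Set V} [DecidablePred (· ∈ C)] {w : V} (hw : w ∉ C)
    (ε : Bool) : flipOn C (w, ε) = (w, ε) :=
  if_neg hw

def avoidAdj (E : Finset (V × V)) (S : Set V) (x y : V) : Prop :=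
  ((x, y) ∈ E ∨ (y, x) ∈ E) ∧ x ∉ S ∧ y ∉ S

instance (E : Finset (V × V)) (S : Set V) : Std.Symm (avoidAdj E S) where
  symm _ _ h := ⟨h.1.symm, h.2.2, h.2.1⟩

variable [DecidableEq V] {H : Finset (BBEdge V)} {F : Finset (V × V)}

lemma bbStep_vert {w : V} (hw : w ∈ posts H) (ε : Bool) : bbStep H (w, ε) (w, !ε) :=
  Or.inl ⟨rfl, by simp, hw⟩

lemma bbStep_horiz {p q : V} {ε : Bool} (h : BBEdge.horiz p q ε ∈ H) :
    bbStep H (p, ε) (q, ε) :=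
  Or.inr ⟨rfl, h⟩

lemma mem_of_horiz_mem_bbEdges {Vs : Finset V} {E : Finset (V × V)} {p q : V} {ε : Bool}
    (h : BBEdge.horiz p q ε ∈ bbEdges Vs E) : (p, q) ∈ E := by
  simp only [bbEdges, Finset.mem_union, Finset.mem_image] at h
  rcases h with (⟨_, _, h⟩ | ⟨_, he, h⟩) | ⟨_, he, h⟩ <;> cases h <;> exact he

lemma mem_posts_M {w : V} (hw : w ∈ posts H) : w ∈ posts (M H F) :=
  Finset.mem_image.mpr ⟨_, hw, rfl⟩

lemma horiz_mem_M_of_mem {p q : V} {ε : Bool} (h : BBEdge.horiz p q ε ∈ H) (hF : (p, q) ∈ F) :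
    BBEdge.horiz p q (!ε) ∈ M H F :=
  Finset.mem_image.mpr ⟨_, h, by simp [mir, hF]⟩

lemma horiz_mem_M_of_notMem {p q : V} {ε : Bool} (h : BBEdge.horiz p q ε ∈ H)
    (hF : (p, q) ∉ F) : BBEdge.horiz p q ε ∈ M H F :=
  Finset.mem_image.mpr ⟨_, h, by simp [mir, hF]⟩

/-- The conditions on `C` under which mirroring `H` across `F` acts on paths as `flipOn C`. -/
structure MirrorCompatible (H : Finset (BBEdge V)) (F : Finset (V × V)) (C : Set V) : Prop where
  not_mem_posts : ∀ w ∈ C, w ∉ posts H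
  mem_iff : ∀ p q ε, BBEdge.horiz p q ε ∈ H → ((p, q) ∈ F ↔ p ∈ C ∨ q ∈ C)
  boundary : ∀ p q ε, BBEdge.horiz p q ε ∈ H → p ∉ posts H → q ∉ posts H →
    (p ∈ C ↔ q ∈ C)

section FlipOn

variable {C : Set V} [DecidablePred (· ∈ C)]

lemma bbReach_M_flipOn_of_bbStep (hC : MirrorCompatible H F C) {a b : V × Bool}
    (hab : bbStep H a b) : bbReach (M H F) (flipOn C a) (flipOn C b) := by
  obtain ⟨p, ε⟩ := a
  obtain ⟨q, δ⟩ := b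
  rcases hab with ⟨rfl, hεδ, hp⟩ | ⟨rfl, h⟩
  · obtain rfl : δ = !ε := by cases ε <;> cases δ <;> simp_all
    have hpC : p ∉ C := fun hpC => hC.not_mem_posts p hpC hp
    simp only [flipOn_of_notMem hpC]
    exact .single (bbStep_vert (mem_posts_M hp) ε)
  · have hpF := hC.mem_iff p q ε h
    by_cases hpC : p ∈ C <;> by_cases hqC : q ∈ C <;>
      simp only [hpC, hqC, flipOn_of_mem, flipOn_of_notMem, not_false_eq_true, or_true, true_or,
        or_self, iff_true, iff_false] at hpF ⊢
    · exact .single (bbStep_horiz (horiz_mem_M_of_mem h hpF))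
    · have hq : q ∈ posts H := by_contra fun hq =>
        hqC ((hC.boundary p q ε h (hC.not_mem_posts p hpC) hq).1 hpC)
      refine .tail (.single (bbStep_horiz (horiz_mem_M_of_mem h hpF))) ?_
      simpa using bbStep_vert (mem_posts_M (F := F) hq) (!ε)
    · have hp : p ∈ posts H := by_contra fun hp =>
        hpC ((hC.boundary p q ε h hp (hC.not_mem_posts q hqC)).2 hqC)
      exact .tail (.single (bbStep_vert (mem_posts_M hp) ε))
        (bbStep_horiz (horiz_mem_M_of_mem h hpF))
    · exact .single (bbStep_horiz (horiz_mem_M_of_notMem h hpF))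

lemma bbReach_M_flipOn (hC : MirrorCompatible H F C) {a b : V × Bool} (hab : bbReach H a b) :
    bbReach (M H F) (flipOn C a) (flipOn C b) :=
  ReflTransGen.lift' (flipOn C) (fun _ _ => bbReach_M_flipOn_of_bbStep hC) _ _ hab

end FlipOn

lemma mirrorCompatible_component {Vs : Finset V} {E : Finset (V × V)} {v : V}
    (hH : H ⊆ bbEdges Vs E)
    (hF : ∀ e : V × V, e ∈ F ↔ e ∈ E ∧
      ((ReflTransGen (avoidAdj E (posts H)) v e.1 ∧ e.1 ∉ posts H) ∨
        (ReflTransGen (avoidAdj E (posts H)) v e.2 ∧ e.2 ∉ posts H))) :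
    MirrorCompatible H F {w | ReflTransGen (avoidAdj E (posts H)) v w ∧ w ∉ posts H} where
  not_mem_posts _ hw := hw.2
  mem_iff _ _ _ h := (hF _).trans (and_iff_right (mem_of_horiz_mem_bbEdges (hH h)))
  boundary p q _ h hp hq := by
    have hpq : avoidAdj E (posts H) p q := ⟨.inl (mem_of_horiz_mem_bbEdges (hH h)), hp, hq⟩
    exact ⟨fun hpC => ⟨hpC.1.tail hpq, hq⟩, fun hqC => ⟨hqC.1.tail (symm hpq), hp⟩⟩

end BunkbedMirror

/-- if `H` contains a directed path from `u⁻` to `v⁻`, every undirected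
path in `G` from `u` to `v` meets the post set `P(H)` (expressed: there is no
undirected walk from `u` to `v` all of whose vertices avoid `P(H)`), and `F = R(P(H))`
is the set of edges of `G` with an endpoint reachable from `v` in the underlying
undirected graph without passing through a vertex of `P(H)`, then `M(H,F)` contains
a directed path from `u⁻` to `v⁺`. -/
theorem mirror_flips_bunk {V : Type} [DecidableEq V]
    (Vs : Finset V) (E : Finset (V × V)) (u v : V)
    (H : Finset (BBEdge V)) (hH : H ⊆ bbEdges Vs E)
    (hcut : ¬ Relation.ReflTransGen
      (fun x y => ((x, y) ∈ E ∨ (y, x) ∈ E) ∧ x ∉ posts H ∧ y ∉ posts H) u v)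
    (hpath : bbReach H (u, false) (v, false))
    (F : Finset (V × V))
    (hF : ∀ e : V × V, e ∈ F ↔ e ∈ E ∧
      ((Relation.ReflTransGen
          (fun x y => ((x, y) ∈ E ∨ (y, x) ∈ E) ∧ x ∉ posts H ∧ y ∉ posts H) v e.1 ∧
          e.1 ∉ posts H) ∨
       (Relation.ReflTransGen
          (fun x y => ((x, y) ∈ E ∨ (y, x) ∈ E) ∧ x ∉ posts H ∧ y ∉ posts H) v e.2 ∧
          e.2 ∉ posts H))) :
    bbReach (M H F) (u, false) (v, true) := by
  classical
  set C := {w | ReflTransGen (avoidAdj E (posts H)) v w ∧ w ∉ posts H}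
  have hu : u ∉ C := fun hu =>
    hcut (show ReflTransGen (avoidAdj E (posts H)) u v from symm hu.1)
  have hreach := bbReach_M_flipOn (mirrorCompatible_component hH hF) hpath
  rw [flipOn_of_notMem hu] at hreach
  by_cases hv : v ∈ C
  · rwa [flipOn_of_mem hv] at hreach
  · have hvP : v ∈ posts H := by_contra fun h => hv ⟨.refl, h⟩
    rw [flipOn_of_notMem hv] at hreach
    exact hreach.tail (bbStep_vert (mem_posts_M hvP) false)
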